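/- Let R = ℤ[s, s⁻¹, t, t⁻¹] and consider the free R-module with basis {u, v, w}. The quotient of R·u ⊕ R·v ⊕ R·w by the submodule generated by (1−t)u + (1−t)v + w, (1−s)(u+v), (1−t)v + w, (1−s+s²)u, (1−s+s²)v, and (1+st)w is isomorphic to R/(R(1−s+s²)+R(1−t)); in particular its underlying additive group is free abelian of rank 2. -/

import Mathlib

/-!
The functional `x ↦ x₀ - x₁` maps the six relations into the ideal `I = (1 - s + s², 1 - t)`.
Conversely, since `s` is a unit the relations generate `u + v`, `w` and `(1 - t)u`, so every
`x` with `x₀ - x₁ ∈ I` lies in their span; hence the quotient is `R/I`. Modulo `I` we have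
`t = 1` and `s(1 - s) = 1`, so `R/I` is `ℤ[X]/(Φ₆)` with `Φ₆ = X² - X + 1`, which is free of
rank `2` over `ℤ`.
-/

/-- `R = ℤ[s,s⁻¹,t,t⁻¹]`, the group ring of the free abelian group with basis `{s, t}`. -/
noncomputable abbrev GroupRingZ2 : Type := AddMonoidAlgebra ℤ (ℤ × ℤ)

/-- The generator `s` of the group ring. -/
noncomputable def sGen : GroupRingZ2 := AddMonoidAlgebra.single (1, 0) 1

/-- The generator `t` of the group ring. -/
noncomputable def tGen : GroupRingZ2 := AddMonoidAlgebra.single (0, 1) 1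

/-- Basis vector `u` of `R³`. -/
noncomputable def uV : Fin 3 → GroupRingZ2 := Pi.single 0 1
/-- Basis vector `v` of `R³`. -/
noncomputable def vV : Fin 3 → GroupRingZ2 := Pi.single 1 1
/-- Basis vector `w` of `R³`. -/
noncomputable def wV : Fin 3 → GroupRingZ2 := Pi.single 2 1

/-- The submodule of `R³` generated by the six rows of the second differential for the
Artin group of type `B₄`. -/
noncomputable def imB4 : Submodule GroupRingZ2 (Fin 3 → GroupRingZ2) :=
  Submodule.span GroupRingZ2
    {(1 - tGen) • uV + (1 - tGen) • vV + wV, (1 - sGen) • (uV + vV), (1 - tGen) • vV + wV,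
      (1 - sGen + sGen ^ 2) • uV, (1 - sGen + sGen ^ 2) • vV, (1 + sGen * tGen) • wV}

open Polynomial

lemma MonoidHom.ext_mint_prod {M : Type*} [CommMonoid M] {f g : Multiplicative (ℤ × ℤ) →* M}
    (h₁ : f (.ofAdd (1, 0)) = g (.ofAdd (1, 0))) (h₂ : f (.ofAdd (0, 1)) = g (.ofAdd (0, 1))) :
    f = g := by
  apply AddMonoidHom.toMultiplicativeLeft.symm.injective
  rw [← AddMonoidHom.coprod_unique (AddMonoidHom.toMultiplicativeLeft.symm f),
    ← AddMonoidHom.coprod_unique (AddMonoidHom.toMultiplicativeLeft.symm g)]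
  congr 1 <;> exact AddMonoidHom.ext_int ‹_›

lemma Polynomial.Monic.rank_adjoinRoot {R : Type*} [CommRing R] [StrongRankCondition R]
    {f : R[X]} (hf : f.Monic) : Module.rank R (AdjoinRoot f) = f.natDegree := by
  simp [rank_eq_card_basis (AdjoinRoot.powerBasis' hf).basis]

namespace GroupRingZ2

lemma isUnit_sGen : IsUnit sGen :=
  (Group.isUnit (Multiplicative.ofAdd ((1 : ℤ), (0 : ℤ)))).map (AddMonoidAlgebra.of ℤ (ℤ × ℤ))

lemma ringHom_ext {B : Type*} [CommSemiring B] {f g : GroupRingZ2 →+* B}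
    (hs : f sGen = g sGen) (ht : f tGen = g tGen) : f = g :=
  AddMonoidAlgebra.ringHom_ext' (RingHom.ext_int _ _) (MonoidHom.ext_mint_prod hs ht)

variable {B : Type*} [CommRing B]

noncomputable def evalUnits (a b : Bˣ) : GroupRingZ2 →+* B :=
  (AddMonoidAlgebra.lift ℤ B (ℤ × ℤ) <| (Units.coeHom B).comp <|
    AddMonoidHom.toMultiplicativeLeft <|
      (zmultiplesHom _ (Additive.ofMul a)).coprod (zmultiplesHom _ (Additive.ofMul b))).toRingHom

@[simp]
lemma evalUnits_sGen (a b : Bˣ) : evalUnits a b sGen = a := by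
  simp [evalUnits, sGen]

@[simp]
lemma evalUnits_tGen (a b : Bˣ) : evalUnits a b tGen = b := by
  simp [evalUnits, tGen]

end GroupRingZ2

section Cyclotomic

variable {R : Type*} [CommRing R]

lemma root_cyclotomic_six_mul_one_sub :
    AdjoinRoot.root (cyclotomic 6 R) * (1 - AdjoinRoot.root (cyclotomic 6 R)) = 1 := by
  have h : aeval (AdjoinRoot.root (cyclotomic 6 R)) (X ^ 2 - X + 1 : R[X]) = 0 := by
    rw [← cyclotomic_six, AdjoinRoot.aeval_eq, AdjoinRoot.mk_self]
  simp only [map_add, map_sub, map_pow, aeval_X, map_one] at h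
  linear_combination -h

variable (R) in
noncomputable def rootCyclotomicSixUnit : (AdjoinRoot (cyclotomic 6 R))ˣ :=
  Units.mkOfMulEqOne _ _ root_cyclotomic_six_mul_one_sub

@[simp]
lemma val_rootCyclotomicSixUnit :
    (rootCyclotomicSixUnit R : AdjoinRoot (cyclotomic 6 R)) = AdjoinRoot.root _ :=
  rfl

end Cyclotomic

noncomputable abbrev idealB4 : Ideal GroupRingZ2 := Ideal.span {1 - sGen + sGen ^ 2, 1 - tGen}

lemma uV_add_vV_mem_imB4 : uV + vV ∈ imB4 := by
  rw [← Submodule.smul_mem_iff_of_isUnit imB4 (GroupRingZ2.isUnit_sGen.pow 2)]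
  have h : sGen ^ 2 • (uV + vV) =
      (1 - sGen + sGen ^ 2) • uV + (1 - sGen + sGen ^ 2) • vV - (1 - sGen) • (uV + vV) := by
    module
  rw [h]
  exact sub_mem (add_mem (Submodule.subset_span (by simp)) (Submodule.subset_span (by simp)))
    (Submodule.subset_span (by simp))

lemma one_sub_tGen_smul_uV_mem_imB4 : (1 - tGen) • uV ∈ imB4 := by
  have h : (1 - tGen) • uV =
      ((1 - tGen) • uV + (1 - tGen) • vV + wV) - ((1 - tGen) • vV + wV) := by
    module
  rw [h]
  exact sub_mem (Submodule.subset_span (by simp)) (Submodule.subset_span (by simp))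

lemma wV_mem_imB4 : wV ∈ imB4 := by
  have h : wV = ((1 - tGen) • vV + wV) - (1 - tGen) • (uV + vV) + (1 - tGen) • uV := by
    module
  rw [h]
  exact add_mem (sub_mem (Submodule.subset_span (by simp))
    (Submodule.smul_mem _ _ uV_add_vV_mem_imB4)) one_sub_tGen_smul_uV_mem_imB4

noncomputable def coordDiff : (Fin 3 → GroupRingZ2) →ₗ[GroupRingZ2] GroupRingZ2 :=
  LinearMap.proj (R := GroupRingZ2) (φ := fun _ : Fin 3 ↦ GroupRingZ2) 0 - LinearMap.proj 1

lemma coordDiff_apply (x : Fin 3 → GroupRingZ2) : coordDiff x = x 0 - x 1 :=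
  rfl

lemma imB4_eq_comap_coordDiff : imB4 = Submodule.comap coordDiff idealB4 := by
  apply le_antisymm
  · rw [imB4, Submodule.span_le]
    rintro _ (rfl | rfl | rfl | rfl | rfl | rfl) <;>
      simp only [uV, vV, wV, SetLike.mem_coe, Submodule.mem_comap, coordDiff_apply,
        Ideal.mem_span_pair]
    exacts [⟨0, 0, by simp⟩, ⟨0, 0, by simp⟩, ⟨0, -1, by simp⟩, ⟨1, 0, by simp⟩,
      ⟨-1, 0, by simp⟩, ⟨0, 0, by simp⟩]
  · intro x hx
    rw [Submodule.mem_comap, coordDiff_apply, Ideal.mem_span_pair] at hx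
    obtain ⟨p, q, hpq⟩ := hx
    have hx' : x = x 2 • wV + x 1 • (uV + vV) + p • (1 - sGen + sGen ^ 2) • uV +
        q • (1 - tGen) • uV := by
      funext i
      fin_cases i <;> simp [uV, vV, wV]
      linear_combination -hpq
    rw [hx']
    exact add_mem (add_mem (add_mem (Submodule.smul_mem _ _ wV_mem_imB4)
      (Submodule.smul_mem _ _ uV_add_vV_mem_imB4))
      (Submodule.smul_mem _ _ (Submodule.subset_span (by simp))))
      (Submodule.smul_mem _ _ one_sub_tGen_smul_uV_mem_imB4)

noncomputable def quotientImB4Equiv :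
    ((Fin 3 → GroupRingZ2) ⧸ imB4) ≃ₗ[GroupRingZ2] GroupRingZ2 ⧸ idealB4 :=
  have hker : imB4 = LinearMap.ker (idealB4.mkQ ∘ₗ coordDiff) := by
    rw [LinearMap.ker_comp, Submodule.ker_mkQ, imB4_eq_comap_coordDiff]
  have hsurj : Function.Surjective (idealB4.mkQ ∘ₗ coordDiff) :=
    idealB4.mkQ_surjective.comp fun a ↦ ⟨Pi.single 0 a, by simp [coordDiff_apply]⟩
  (Submodule.quotEquivOfEq _ _ hker).trans (LinearMap.quotKerEquivOfSurjective _ hsurj)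

section QuotientRing

open Ideal.Quotient

@[simp]
lemma mk_tGen_eq_one : mk idealB4 tGen = 1 := by
  have h : mk idealB4 (1 - tGen) = 0 := eq_zero_iff_mem.2 (Ideal.subset_span (by simp))
  rw [map_sub, map_one] at h
  linear_combination -h

lemma cyclotomic_six_eval₂_mk_sGen :
    (cyclotomic 6 ℤ).eval₂ (Int.castRingHom _) (mk idealB4 sGen) = 0 := by
  have h : mk idealB4 (1 - sGen + sGen ^ 2) = 0 :=
    eq_zero_iff_mem.2 (Ideal.subset_span (by simp))
  rw [map_add, map_sub, map_one, map_pow] at h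
  rw [cyclotomic_six]
  simp only [eval₂_add, eval₂_sub, eval₂_pow, eval₂_X, eval₂_one]
  linear_combination h

noncomputable def quotientToAdjoinRoot : GroupRingZ2 ⧸ idealB4 →+* AdjoinRoot (cyclotomic 6 ℤ) :=
  lift idealB4 (GroupRingZ2.evalUnits (rootCyclotomicSixUnit ℤ) 1) fun _ ha ↦ by
    refine (Ideal.span_le (I := RingHom.ker _).2 ?_) ha
    rintro _ (rfl | rfl) <;> simp only [SetLike.mem_coe, RingHom.mem_ker, map_add, map_sub,
      map_one, map_pow, GroupRingZ2.evalUnits_sGen, GroupRingZ2.evalUnits_tGen, Units.val_one,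
      sub_self, val_rootCyclotomicSixUnit]
    linear_combination -(root_cyclotomic_six_mul_one_sub (R := ℤ))

@[simp]
lemma quotientToAdjoinRoot_mk (a : GroupRingZ2) :
    quotientToAdjoinRoot (mk idealB4 a) = GroupRingZ2.evalUnits (rootCyclotomicSixUnit ℤ) 1 a :=
  rfl

noncomputable def adjoinRootToQuotient : AdjoinRoot (cyclotomic 6 ℤ) →+* GroupRingZ2 ⧸ idealB4 :=
  AdjoinRoot.lift (Int.castRingHom _) (mk idealB4 sGen) cyclotomic_six_eval₂_mk_sGen

@[simp]
lemma adjoinRootToQuotient_root : adjoinRootToQuotient (AdjoinRoot.root _) = mk idealB4 sGen :=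
  AdjoinRoot.lift_root _

noncomputable def quotientEquivAdjoinRoot :
    GroupRingZ2 ⧸ idealB4 ≃+* AdjoinRoot (cyclotomic 6 ℤ) :=
  RingEquiv.ofRingHom quotientToAdjoinRoot adjoinRootToQuotient
    (AdjoinRoot.ringHom_ext (RingHom.ext_int _ _) (by simp))
    (ringHom_ext (GroupRingZ2.ringHom_ext (by simp) (by simp)))

end QuotientRing

noncomputable def quotientImB4EquivAdjoinRoot :
    ((Fin 3 → GroupRingZ2) ⧸ imB4) ≃ₗ[ℤ] AdjoinRoot (cyclotomic 6 ℤ) :=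
  (quotientImB4Equiv.restrictScalars ℤ).trans quotientEquivAdjoinRoot.toAddEquiv.toIntLinearEquiv

/-- Let `R = ℤ[s,s⁻¹,t,t⁻¹]` and let `u, v, w` be a basis of the free `R`-module `R³`.
The quotient of `R³` by the submodule generated by `(1−t)u + (1−t)v + w`, `(1−s)(u+v)`,
`(1−t)v + w`, `(1−s+s²)u`, `(1−s+s²)v` and `(1+st)w` is isomorphic to
`R/(R(1−s+s²)+R(1−t))`; in particular its underlying additive group is free abelian of
rank 2.  (Type `B₄`.) -/
theorem quotient_B4 :
    Nonempty
        (((Fin 3 → GroupRingZ2) ⧸ imB4) ≃ₗ[GroupRingZ2]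
          (GroupRingZ2 ⧸ Ideal.span {1 - sGen + sGen ^ 2, 1 - tGen})) ∧
      Module.Free ℤ ((Fin 3 → GroupRingZ2) ⧸ imB4) ∧
      Module.rank ℤ ((Fin 3 → GroupRingZ2) ⧸ imB4) = 2 := by
  have hmonic := cyclotomic.monic 6 ℤ
  have := hmonic.free_adjoinRoot
  refine ⟨⟨quotientImB4Equiv⟩, .of_equiv quotientImB4EquivAdjoinRoot.symm, ?_⟩
  rw [quotientImB4EquivAdjoinRoot.rank_eq, hmonic.rank_adjoinRoot, natDegree_cyclotomic]
  rfl
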